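/- arXiv:1908.01105 — 2 statements merged into one kernel-verified Lean document; each statement's English description precedes it below -/
import Mathlib

section
/- For every integer k ≥ 1 and every quaternion q, one has ∂̄(f̃_{k+2})(q) = 2(k+2) f̃_{k+1}(q), where f̃_n(q) := Δ(q^n) denotes the Laplacian of the monomial q^n. -/
open Quaternion Finset

noncomputable section

/-- The imaginary unit `i` of the quaternions. -/
def qI : ℍ[ℝ] := ⟨0, 1, 0, 0⟩

/-- The imaginary unit `j` of the quaternions. -/
def qJ : ℍ[ℝ] := ⟨0, 0, 1, 0⟩

/-- The imaginary unit `k` of the quaternions. -/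
def qK : ℍ[ℝ] := ⟨0, 0, 0, 1⟩

/-- Directional (partial) derivative of `f : ℍ → ℍ` along the direction `v`, at `q`. -/
def dd (v : ℍ[ℝ]) (f : ℍ[ℝ] → ℍ[ℝ]) (q : ℍ[ℝ]) : ℍ[ℝ] := fderiv ℝ f q v

/-- The Cauchy–Fueter operator `∂f = ∂_{x₀}f + i ∂_{x₁}f + j ∂_{x₂}f + k ∂_{x₃}f`. -/
def CF (f : ℍ[ℝ] → ℍ[ℝ]) (q : ℍ[ℝ]) : ℍ[ℝ] :=
  dd 1 f q + qI * dd qI f q + qJ * dd qJ f q + qK * dd qK f q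

/-- The conjugate Cauchy–Fueter operator `∂̄f = ∂_{x₀}f − i ∂_{x₁}f − j ∂_{x₂}f − k ∂_{x₃}f`. -/
def CFbar (f : ℍ[ℝ] → ℍ[ℝ]) (q : ℍ[ℝ]) : ℍ[ℝ] :=
  dd 1 f q - qI * dd qI f q - qJ * dd qJ f q - qK * dd qK f q

/-- The Laplacian `Δf = ∂²_{x₀}f + ∂²_{x₁}f + ∂²_{x₂}f + ∂²_{x₃}f` on `ℍ ≅ ℝ⁴`. -/
def lap (f : ℍ[ℝ] → ℍ[ℝ]) (q : ℍ[ℝ]) : ℍ[ℝ] :=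
  dd 1 (dd 1 f) q + dd qI (dd qI f) q + dd qJ (dd qJ f) q + dd qK (dd qK f) q

local notation "Q" => (ℍ[ℝ])


def starCLM : Q →L[ℝ] Q :=
  LinearMap.toContinuousLinearMap
    { toFun := star
      map_add' := star_add
      map_smul' := by intro r x; ext <;> simp }

@[simp] lemma starCLM_apply (x : Q) : starCLM x = star x := rfl

lemma contDiff_star' : ContDiff ℝ ⊤ (fun p : Q => star p) := starCLM.contDiff
lemma contDiff_pow' (n : ℕ) : ContDiff ℝ ⊤ (fun p : Q => p ^ n) := by
  induction n with
  | zero => simpa using contDiff_const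
  | succ n ih => simpa [pow_succ] using ih.mul contDiff_id

lemma dd_contDiff {f : Q → Q} (hf : ContDiff ℝ ⊤ f) (v : Q) :
    ContDiff ℝ ⊤ (dd v f) := by
  exact (hf.fderiv_right (m := ⊤) le_top).clm_apply (contDiff_const (c := v))

lemma dd_const (v c q : Q) : dd v (fun _ => c) q = 0 := by simp [dd]

lemma dd_add {f g : Q → Q} (hf : DifferentiableAt ℝ f q) (hg : DifferentiableAt ℝ g q) (v : Q) :
    dd v (fun p => f p + g p) q = dd v f q + dd v g q := by
  simp [dd, fderiv_fun_add hf hg]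

lemma dd_sub {f g : Q → Q} (hf : DifferentiableAt ℝ f q) (hg : DifferentiableAt ℝ g q) (v : Q) :
    dd v (fun p => f p - g p) q = dd v f q - dd v g q := by
  simp [dd, fderiv_fun_sub hf hg]

lemma dd_mul {f g : Q → Q} (hf : DifferentiableAt ℝ f q) (hg : DifferentiableAt ℝ g q) (v : Q) :
    dd v (fun p => f p * g p) q = dd v f q * g q + f q * dd v g q := by
  have h := (hf.hasFDerivAt.fun_mul' hg.hasFDerivAt).fderiv
  simp only [dd, h]
  simp [ContinuousLinearMap.smul_apply, ContinuousLinearMap.smulRight_apply, smul_eq_mul]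
  abel

lemma dd_smul {f : Q → Q} (hf : DifferentiableAt ℝ f q) (c : ℝ) (v : Q) :
    dd v (fun p => c • f p) q = c • dd v f q := by
  simp [dd, fderiv_fun_const_smul hf]

lemma dd_sum {ι : Type*} {s : Finset ι} {F : ι → Q → Q}
    (h : ∀ i ∈ s, DifferentiableAt ℝ (F i) q) (v : Q) :
    dd v (fun p => ∑ i ∈ s, F i p) q = ∑ i ∈ s, dd v (F i) q := by
  simp [dd, fderiv_fun_sum h]

lemma dd_clm (L : Q →L[ℝ] Q) (v q : Q) : dd v (fun p => L p) q = L v := by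
  simp [dd, L.fderiv]

lemma dd_clm_comp {f : Q → Q} (L : Q →L[ℝ] Q) (hf : DifferentiableAt ℝ f q) (v : Q) :
    dd v (fun p => L (f p)) q = L (dd v f q) := by
  have h := (L.hasFDerivAt.comp q hf.hasFDerivAt).fderiv
  have : (fun p => L (f p)) = ⇑L ∘ f := rfl
  rw [dd, this, h]; rfl

lemma dd_id (v q : Q) : dd v (fun p => p) q = v := by
  simpa using dd_clm (ContinuousLinearMap.id ℝ Q) v q

/-- the Fréchet derivative of `p ↦ p ^ n`. -/
def powCLM (n : ℕ) (q : Q) : Q →L[ℝ] Q :=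
  ∑ i ∈ range n, ContinuousLinearMap.mulLeftRight ℝ Q (q ^ i) (q ^ (n - 1 - i))

lemma hasFDerivAt_qpow (n : ℕ) (q : Q) :
    HasFDerivAt (fun p : Q => p ^ n) (powCLM n q) q := by
  induction n with
  | zero =>
    simpa [powCLM] using (hasFDerivAt_const (1 : Q) q)
  | succ n ih =>
    have h := ih.fun_mul' (hasFDerivAt_id q)
    simp only [id_eq] at h
    have heq : (fun p : Q => p ^ n * p) = fun p : Q => p ^ (n + 1) := by
      funext p; rw [pow_succ]
    rw [heq] at h
    refine h.congr_fderiv ?_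
    symm
    refine ContinuousLinearMap.ext fun v => ?_
    simp only [powCLM, ContinuousLinearMap.sum_apply, ContinuousLinearMap.mulLeftRight_apply,
      ContinuousLinearMap.add_apply, ContinuousLinearMap.smul_apply,
      ContinuousLinearMap.smulRight_apply, ContinuousLinearMap.coe_id', id_eq, smul_eq_mul, op_smul_eq_mul]
    rw [Finset.sum_range_succ, Finset.sum_mul, add_comm]
    congr 1
    · simp
    · apply Finset.sum_congr rfl
      intro i hi
      have hi' : i < n := Finset.mem_range.1 hi
      have h1 : n - 1 - i + 1 = n - i := by omega
      have h2 : n + 1 - 1 - i = n - i := by omega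
      rw [h2, mul_assoc (q ^ i * v), ← pow_succ, h1]

lemma dd_pow (n : ℕ) (v q : Q) :
    dd v (fun p : Q => p ^ n) q = ∑ i ∈ range n, q ^ i * v * q ^ (n - 1 - i) := by
  simp [dd, (hasFDerivAt_qpow n q).fderiv, powCLM]

lemma dd_conjpow (n : ℕ) (v q : Q) :
    dd v (fun p : Q => star p ^ n) q
      = ∑ i ∈ range n, star q ^ i * star v * star q ^ (n - 1 - i) := by
  have hfun : (fun p : Q => star p ^ n) = fun p : Q => starCLM (p ^ n) := by
    funext p; simp [star_pow]
  rw [hfun, dd_clm_comp _ ((contDiff_pow' n).differentiable (by simp) q), dd_pow]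
  rw [map_sum]
  rw [← Finset.sum_range_reflect]
  apply Finset.sum_congr rfl
  intro i hi
  have hi' : i < n := Finset.mem_range.1 hi
  have h1 : n - 1 - (n - 1 - i) = i := by omega
  simp [star_mul, star_pow, h1, mul_assoc]

/-- `G m q = ∑_{i+j=m} (star q)^i q^j`, the zonal harmonic building block. -/
def G (m : ℕ) (q : Q) : Q := ∑ i ∈ range (m + 1), star q ^ i * q ^ (m - i)

lemma contDiff_G (m : ℕ) : ContDiff ℝ ⊤ (G m) := by
  unfold G
  apply ContDiff.sum
  intro i _
  exact (((contDiff_pow' i).comp contDiff_star')).mul (contDiff_pow' (m - i))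

lemma differentiable_G (m : ℕ) : Differentiable ℝ (G m) :=
  (contDiff_G m).differentiable (by simp)

lemma dd_G (m : ℕ) (v q : Q) :
    dd v (G m) q = ∑ i ∈ range (m + 1),
      ((∑ c ∈ range i, star q ^ c * star v * star q ^ (i - 1 - c)) * q ^ (m - i)
        + star q ^ i * ∑ c ∈ range (m - i), q ^ c * v * q ^ (m - i - 1 - c)) := by
  unfold G
  have hdiff : ∀ i ∈ range (m + 1), DifferentiableAt ℝ (fun p : Q => star p ^ i * p ^ (m - i)) q := by
    intro i _
    exact ((((contDiff_pow' i).comp contDiff_star').mul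
      (contDiff_pow' (m - i))).differentiable (by simp)).differentiableAt
  rw [dd_sum hdiff]
  apply Finset.sum_congr rfl
  intro i _
  have h1 : DifferentiableAt ℝ (fun p : Q => star p ^ i) q :=
    (((contDiff_pow' i).comp contDiff_star').differentiable (by simp)).differentiableAt
  have h2 : DifferentiableAt ℝ (fun p : Q => p ^ (m - i)) q :=
    ((contDiff_pow' (m - i)).differentiable (by simp)).differentiableAt
  rw [dd_mul (f := fun p : Q => star p ^ i) (g := fun p : Q => p ^ (m - i)) h1 h2]
  rw [dd_conjpow, dd_pow]

lemma euler_G (m : ℕ) (q : Q) : dd q (G m) q = m • G m q := by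
  rw [dd_G]
  unfold G
  rw [Finset.smul_sum]
  apply Finset.sum_congr rfl
  intro i hi
  have hi' : i < m + 1 := Finset.mem_range.1 hi
  have h1 : ∀ c ∈ range i, star q ^ c * star q * star q ^ (i - 1 - c) = star q ^ i := by
    intro c hc
    have hc' : c < i := Finset.mem_range.1 hc
    rw [← pow_succ, ← pow_add]
    congr 1; omega
  have h2 : ∀ c ∈ range (m - i), q ^ c * q * q ^ (m - i - 1 - c) = q ^ (m - i) := by
    intro c hc
    have hc' : c < m - i := Finset.mem_range.1 hc
    rw [← pow_succ, ← pow_add]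
    congr 1; omega
  rw [Finset.sum_congr rfl h1, Finset.sum_congr rfl h2]
  rw [Finset.sum_const, Finset.sum_const, Finset.card_range, Finset.card_range]
  rw [smul_mul_assoc, mul_smul_comm, ← add_smul]
  congr 1
  omega

lemma dd1_G (m : ℕ) (q : Q) : dd 1 (G (m + 1)) q = (m + 2) • G m q := by
  rw [dd_G]
  have hsimp : ∀ i ∈ range (m + 2),
      ((∑ c ∈ range i, star q ^ c * star (1:Q) * star q ^ (i - 1 - c)) * q ^ (m + 1 - i)
        + star q ^ i * ∑ c ∈ range (m + 1 - i), q ^ c * (1:Q) * q ^ (m + 1 - i - 1 - c))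
      = i • (star q ^ (i - 1) * q ^ (m + 1 - i))
        + (m + 1 - i) • (star q ^ i * q ^ (m - i)) := by
    intro i hi
    have hi' : i < m + 2 := Finset.mem_range.1 hi
    congr 1
    · have h3 : ∀ c ∈ range i, star q ^ c * star (1:Q) * star q ^ (i - 1 - c)
          = star q ^ (i - 1) := by
        intro c hc
        have hc' : c < i := Finset.mem_range.1 hc
        rw [star_one, mul_one, ← pow_add]
        congr 1; omega
      rw [Finset.sum_congr rfl h3, Finset.sum_const, Finset.card_range, smul_mul_assoc]
    · have h3 : ∀ c ∈ range (m + 1 - i), q ^ c * (1:Q) * q ^ (m + 1 - i - 1 - c)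
          = q ^ (m - i) := by
        intro c hc
        have hc' : c < m + 1 - i := Finset.mem_range.1 hc
        rw [mul_one, ← pow_add]
        congr 1; omega
      rw [Finset.sum_congr rfl h3, Finset.sum_const, Finset.card_range, mul_smul_comm]
  rw [Finset.sum_congr rfl hsimp, Finset.sum_add_distrib]
  rw [Finset.sum_range_succ' (fun i => i • (star q ^ (i - 1) * q ^ (m + 1 - i)))]
  rw [Finset.sum_range_succ (fun i => (m + 1 - i) • (star q ^ i * q ^ (m - i)))]
  simp only [Nat.sub_self, zero_smul, add_zero, zero_add, Nat.add_sub_cancel]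
  unfold G
  rw [Finset.smul_sum, ← Finset.sum_add_distrib]
  apply Finset.sum_congr rfl
  intro i hi
  have hi' : i < m + 1 := Finset.mem_range.1 hi
  have e2 : m + 1 - (i + 1) = m - i := by omega
  rw [e2, ← add_smul]
  congr 1
  omega

lemma G_rec (m : ℕ) (q : Q) :
    G (m + 2) q = (q + star q) * G (m + 1) q - (star q * q) * G m q := by
  have hab : Commute (star q) q := (star_comm_self' q)
  unfold G
  rw [add_mul]
  have hb : q * ∑ i ∈ range (m + 2), star q ^ i * q ^ (m + 1 - i)
      = ∑ i ∈ range (m + 2), star q ^ i * q ^ (m + 2 - i) := by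
    rw [Finset.mul_sum]
    apply Finset.sum_congr rfl
    intro i hi
    have hi' : i < m + 2 := Finset.mem_range.1 hi
    rw [← mul_assoc, ((hab.pow_left i).symm).eq, mul_assoc, ← pow_succ']
    congr 2; omega
  have ha : star q * ∑ i ∈ range (m + 2), star q ^ i * q ^ (m + 1 - i)
      = ∑ i ∈ range (m + 2), star q ^ (i + 1) * q ^ (m + 1 - i) := by
    rw [Finset.mul_sum]
    apply Finset.sum_congr rfl
    intro i _
    rw [← mul_assoc, ← pow_succ']
  have hs : star q * q * ∑ i ∈ range (m + 1), star q ^ i * q ^ (m - i)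
      = ∑ i ∈ range (m + 1), star q ^ (i + 1) * q ^ (m + 1 - i) := by
    rw [mul_assoc, Finset.mul_sum, Finset.mul_sum]
    apply Finset.sum_congr rfl
    intro i hi
    have hi' : i < m + 1 := Finset.mem_range.1 hi
    rw [← mul_assoc q, ((hab.pow_left i).symm).eq, mul_assoc, ← pow_succ', ← mul_assoc,
      ← pow_succ']
    congr 2; omega
  rw [hb, ha, hs]
  rw [Finset.sum_range_succ (fun i => star q ^ (i + 1) * q ^ (m + 1 - i))]
  simp only [Nat.sub_self, pow_zero, mul_one]
  rw [Finset.sum_range_succ (fun i => star q ^ i * q ^ (m + 2 - i))]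
  simp only [Nat.sub_self, pow_zero, mul_one]
  abel
@[simp] lemma qI_re : qI.re = 0 := rfl
@[simp] lemma qI_imI : qI.imI = 1 := rfl
@[simp] lemma qI_imJ : qI.imJ = 0 := rfl
@[simp] lemma qI_imK : qI.imK = 0 := rfl
@[simp] lemma qJ_re : qJ.re = 0 := rfl
@[simp] lemma qJ_imI : qJ.imI = 0 := rfl
@[simp] lemma qJ_imJ : qJ.imJ = 1 := rfl
@[simp] lemma qJ_imK : qJ.imK = 0 := rfl
@[simp] lemma qK_re : qK.re = 0 := rfl
@[simp] lemma qK_imI : qK.imI = 0 := rfl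
@[simp] lemma qK_imJ : qK.imJ = 0 := rfl
@[simp] lemma qK_imK : qK.imK = 1 := rfl

lemma quatId (w : Q) :
    qI * w * qI + qJ * w * qJ + qK * w * qK = -w - 2 * star w := by
  rw [two_mul]
  ext <;> simp [Quaternion.re_mul, Quaternion.imI_mul, Quaternion.imJ_mul, Quaternion.imK_mul] <;> ring

lemma star_mul_unit_I (q : Q) : star qI * q + star q * qI = ((2 * q.imI : ℝ) : Q) := by
  ext <;> simp [Quaternion.re_mul, Quaternion.imI_mul, Quaternion.imJ_mul, Quaternion.imK_mul] <;> ring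
lemma star_mul_unit_J (q : Q) : star qJ * q + star q * qJ = ((2 * q.imJ : ℝ) : Q) := by
  ext <;> simp [Quaternion.re_mul, Quaternion.imI_mul, Quaternion.imJ_mul, Quaternion.imK_mul] <;> ring
lemma star_mul_unit_K (q : Q) : star qK * q + star q * qK = ((2 * q.imK : ℝ) : Q) := by
  ext <;> simp [Quaternion.re_mul, Quaternion.imI_mul, Quaternion.imJ_mul, Quaternion.imK_mul] <;> ring
lemma star_mul_unit_one (q : Q) : star (1:Q) * q + star q * (1:Q) = ((2 * q.re : ℝ) : Q) := by
  ext <;> simp <;> ring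

lemma unit_norm_I : star qI * qI = 1 := by
  ext <;> simp [Quaternion.re_mul, Quaternion.imI_mul, Quaternion.imJ_mul, Quaternion.imK_mul]
lemma unit_norm_J : star qJ * qJ = 1 := by
  ext <;> simp [Quaternion.re_mul, Quaternion.imI_mul, Quaternion.imJ_mul, Quaternion.imK_mul]
lemma unit_norm_K : star qK * qK = 1 := by
  ext <;> simp [Quaternion.re_mul, Quaternion.imI_mul, Quaternion.imJ_mul, Quaternion.imK_mul]

lemma trace_I : qI + star qI = 0 := by ext <;> simp
lemma trace_J : qJ + star qJ = 0 := by ext <;> simp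
lemma trace_K : qK + star qK = 0 := by ext <;> simp
lemma trace_one : (1:Q) + star (1:Q) = 2 := by rw [star_one]; exact one_add_one_eq_two

lemma decomp (q : Q) : q.re • (1:Q) + q.imI • qI + q.imJ • qJ + q.imK • qK = q := by
  ext <;> simp

lemma CFbar_pow (n : ℕ) (q : Q) :
    CFbar (fun p : Q => p ^ (n + 1)) q = ((n + 1) * 2) • q ^ n + 2 • G n q := by
  unfold CFbar
  rw [dd_pow, dd_pow, dd_pow, dd_pow]
  rw [Finset.mul_sum, Finset.mul_sum, Finset.mul_sum]
  rw [← Finset.sum_sub_distrib, ← Finset.sum_sub_distrib, ← Finset.sum_sub_distrib]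
  have key : ∀ i ∈ range (n + 1),
      q ^ i * 1 * q ^ (n + 1 - 1 - i) - qI * (q ^ i * qI * q ^ (n + 1 - 1 - i))
        - qJ * (q ^ i * qJ * q ^ (n + 1 - 1 - i)) - qK * (q ^ i * qK * q ^ (n + 1 - 1 - i))
      = 2 • q ^ n + 2 • (star q ^ i * q ^ (n - i)) := by
    intro i hi
    have hi' : i < n + 1 := Finset.mem_range.1 hi
    have e1 : n + 1 - 1 - i = n - i := by omega
    rw [e1, mul_one]
    have assoc : ∀ u : Q, u * (q ^ i * u * q ^ (n - i)) = (u * q ^ i * u) * q ^ (n - i) := by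
      intro u; noncomm_ring
    rw [assoc qI, assoc qJ, assoc qK]
    have hw := quatId (q ^ i)
    have : q ^ i * q ^ (n - i) - qI * q ^ i * qI * q ^ (n - i) - qJ * q ^ i * qJ * q ^ (n - i)
        - qK * q ^ i * qK * q ^ (n - i)
        = q ^ i * q ^ (n - i)
          - (qI * q ^ i * qI + qJ * q ^ i * qJ + qK * q ^ i * qK) * q ^ (n - i) := by
      noncomm_ring
    have e2 : i + (n - i) = n := by omega
    have hq : q ^ i * q ^ (n - i) = q ^ n := by rw [← pow_add, e2]
    rw [this, hw, sub_mul, neg_mul, mul_assoc, hq, star_pow, two_smul, two_smul]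
    noncomm_ring
  rw [Finset.sum_congr rfl key, Finset.sum_add_distrib, Finset.sum_const, Finset.card_range,
    ← Finset.smul_sum]
  rw [smul_smul]
  rfl
lemma dd_const_mul {q : Q} {g : Q → Q} (hg : DifferentiableAt ℝ g q) (c v : Q) :
    dd v (fun p => c * g p) q = c * dd v g q := by
  have h := dd_mul (f := fun _ => c) (g := g) (differentiableAt_const c) hg v
  rw [dd_const] at h
  simpa using h

lemma dd_symm {f : Q → Q} (hf : ContDiff ℝ ⊤ f) (v w q : Q) :
    dd v (dd w f) q = dd w (dd v f) q := by
  have hdf : DifferentiableAt ℝ (fderiv ℝ f) q :=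
    ((hf.fderiv_right (m := ⊤) le_top).differentiable (by simp)).differentiableAt
  have h1 : ∀ u : Q, fderiv ℝ (fun p => fderiv ℝ f p u) q = (fderiv ℝ (fderiv ℝ f) q).flip u := by
    intro u
    have h := fderiv_clm_apply (c := fderiv ℝ f) (u := fun _ => u) hdf (differentiableAt_const u)
    simpa using h
  have hsym := (hf.contDiffAt (x := q)).isSymmSndFDerivAt (n := ⊤) le_top
  have e1 : dd v (dd w f) q = fderiv ℝ (fderiv ℝ f) q v w := by
    show fderiv ℝ (fun p => fderiv ℝ f p w) q v = _
    rw [h1 w]; rfl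
  have e2 : dd w (dd v f) q = fderiv ℝ (fderiv ℝ f) q w v := by
    show fderiv ℝ (fun p => fderiv ℝ f p v) q w = _
    rw [h1 v]; rfl
  rw [e1, e2, hsym v w]

lemma dd3 {f : Q → Q} (hf : ContDiff ℝ ⊤ f) (e w q : Q) :
    dd e (dd w (dd w f)) q = dd w (dd w (dd e f)) q := by
  calc dd e (dd w (dd w f)) q = dd w (dd e (dd w f)) q := dd_symm (dd_contDiff hf w) e w q
  _ = dd w (dd w (dd e f)) q := by
      rw [show dd e (dd w f) = dd w (dd e f) from funext fun p => dd_symm hf e w p]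

lemma CFbar_lap_comm {f : Q → Q} (hf : ContDiff ℝ ⊤ f) (q : Q) :
    CFbar (lap f) q = lap (CFbar f) q := by
  have h2 : ∀ w : Q, ContDiff ℝ ⊤ (dd w f) := fun w => dd_contDiff hf w
  have h3 : ∀ w e : Q, ContDiff ℝ ⊤ (dd e (dd w f)) := fun w e => dd_contDiff (h2 w) e
  have hd3 : ∀ (w e : Q) (p : Q), DifferentiableAt ℝ (dd e (dd w f)) p :=
    fun w e p => ((h3 w e).differentiable (by simp)).differentiableAt
  have hd2 : ∀ (w : Q) (p : Q), DifferentiableAt ℝ (dd w f) p :=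
    fun w p => ((h2 w).differentiable (by simp)).differentiableAt
  -- derivative of lap f in a direction e
  have hddlap : ∀ (e : Q), dd e (lap f) q
      = dd 1 (dd 1 (dd e f)) q + dd qI (dd qI (dd e f)) q
        + dd qJ (dd qJ (dd e f)) q + dd qK (dd qK (dd e f)) q := by
    intro e
    have hfun : lap f = fun p => ((dd 1 (dd 1 f) p + dd qI (dd qI f) p)
        + dd qJ (dd qJ f) p) + dd qK (dd qK f) p := rfl
    rw [hfun]
    rw [dd_add (((hd3 1 1 q).fun_add (hd3 qI qI q)).fun_add (hd3 qJ qJ q)) (hd3 qK qK q)]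
    rw [dd_add ((hd3 1 1 q).fun_add (hd3 qI qI q)) (hd3 qJ qJ q)]
    rw [dd_add (hd3 1 1 q) (hd3 qI qI q)]
    rw [dd3 hf e 1 q, dd3 hf e qI q, dd3 hf e qJ q, dd3 hf e qK q]
  -- derivative of CFbar f in a direction w, as a function
  have hCF1 : ∀ w : Q, dd w (CFbar f) = fun p => dd w (dd 1 f) p - qI * dd w (dd qI f) p
      - qJ * dd w (dd qJ f) p - qK * dd w (dd qK f) p := by
    intro w
    funext p
    have hfun : CFbar f = fun p' => (((dd 1 f p' - qI * dd qI f p') - qJ * dd qJ f p')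
        - qK * dd qK f p') := rfl
    rw [hfun]
    rw [dd_sub (((hd2 1 p).fun_sub ((hd2 qI p).const_mul qI)).fun_sub ((hd2 qJ p).const_mul qJ))
      ((hd2 qK p).const_mul qK)]
    rw [dd_sub ((hd2 1 p).fun_sub ((hd2 qI p).const_mul qI)) ((hd2 qJ p).const_mul qJ)]
    rw [dd_sub (hd2 1 p) ((hd2 qI p).const_mul qI)]
    rw [dd_const_mul (hd2 qI p), dd_const_mul (hd2 qJ p), dd_const_mul (hd2 qK p)]
  have hCF2 : ∀ w : Q, dd w (dd w (CFbar f)) q = dd w (dd w (dd 1 f)) q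
      - qI * dd w (dd w (dd qI f)) q - qJ * dd w (dd w (dd qJ f)) q
      - qK * dd w (dd w (dd qK f)) q := by
    intro w
    rw [hCF1 w]
    rw [dd_sub (((hd3 1 w q).fun_sub ((hd3 qI w q).const_mul qI)).fun_sub ((hd3 qJ w q).const_mul qJ))
      ((hd3 qK w q).const_mul qK)]
    rw [dd_sub ((hd3 1 w q).fun_sub ((hd3 qI w q).const_mul qI)) ((hd3 qJ w q).const_mul qJ)]
    rw [dd_sub (hd3 1 w q) ((hd3 qI w q).const_mul qI)]
    rw [dd_const_mul (hd3 qI w q), dd_const_mul (hd3 qJ w q), dd_const_mul (hd3 qK w q)]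
  show dd 1 (lap f) q - qI * dd qI (lap f) q - qJ * dd qJ (lap f) q - qK * dd qK (lap f) q
      = dd 1 (dd 1 (CFbar f)) q + dd qI (dd qI (CFbar f)) q + dd qJ (dd qJ (CFbar f)) q
        + dd qK (dd qK (CFbar f)) q
  rw [hddlap 1, hddlap qI, hddlap qJ, hddlap qK, hCF2 1, hCF2 qI, hCF2 qJ, hCF2 qK]
  simp only [mul_add]
  abel
lemma differentiable_star' : Differentiable ℝ (fun x : Q => star x) :=
  contDiff_star'.differentiable (by simp)

lemma dd_star (v p : Q) : dd v (fun x : Q => star x) p = star v := by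
  have h := dd_clm starCLM v p
  simpa using h

lemma dd_mul_const {q : Q} {g : Q → Q} (hg : DifferentiableAt ℝ g q) (c v : Q) :
    dd v (fun p => g p * c) q = dd v g q * c := by
  have h := dd_mul (f := g) (g := fun _ => c) hg (differentiableAt_const c) v
  rw [dd_const] at h
  simpa using h

lemma dd_T (v p : Q) : dd v (fun x : Q => x + star x) p = v + star v := by
  rw [dd_add differentiableAt_fun_id (differentiable_star'.differentiableAt), dd_id, dd_star]

lemma dd_ddT (e q : Q) : dd e (dd e (fun x : Q => x + star x)) q = 0 := by
  rw [show dd e (fun x : Q => x + star x) = fun _ => e + star e from funext fun p => dd_T e p]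
  exact dd_const e _ q

lemma dd_S (v p : Q) : dd v (fun x : Q => star x * x) p = star v * p + star p * v := by
  rw [dd_mul (differentiable_star'.differentiableAt) differentiableAt_fun_id v]
  rw [dd_star, dd_id]

lemma dd_ddS (e q : Q) : dd e (dd e (fun x : Q => star x * x)) q = star e * e + star e * e := by
  rw [show dd e (fun x : Q => star x * x) = fun p => star e * p + star p * e
    from funext fun p => dd_S e p]
  rw [dd_add ((differentiableAt_fun_id).const_mul (star e))
    ((differentiable_star'.differentiableAt).mul_const e)]
  rw [dd_const_mul differentiableAt_fun_id (star e) e, dd_id]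
  rw [dd_mul_const (differentiable_star'.differentiableAt) e e, dd_star]

lemma lap_G0 (q : Q) : lap (G 0) q = 0 := by
  have h0 : G 0 = fun _ : Q => (1 : Q) := by
    funext p; simp [G]
  have h1 : ∀ e : Q, dd e (G 0) = fun _ : Q => (0 : Q) := by
    intro e; funext p; rw [h0]; exact dd_const e 1 p
  show dd 1 (dd 1 (G 0)) q + dd qI (dd qI (G 0)) q + dd qJ (dd qJ (G 0)) q
      + dd qK (dd qK (G 0)) q = 0
  rw [h1 1, h1 qI, h1 qJ, h1 qK, dd_const, dd_const, dd_const, dd_const]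
  simp

lemma lap_G1 (q : Q) : lap (G 1) q = 0 := by
  have h0 : G 1 = fun p : Q => p + star p := by
    funext p; simp [G, Finset.sum_range_succ]
  have h1 : ∀ e : Q, dd e (G 1) = fun _ : Q => e + star e := by
    intro e; funext p; rw [h0]; exact dd_T e p
  show dd 1 (dd 1 (G 1)) q + dd qI (dd qI (G 1)) q + dd qJ (dd qJ (G 1)) q
      + dd qK (dd qK (G 1)) q = 0
  rw [h1 1, h1 qI, h1 qJ, h1 qK, dd_const, dd_const, dd_const, dd_const]
  simp

lemma lap_G_succ (m : ℕ) (ih0 : ∀ q, lap (G m) q = 0) (ih1 : ∀ q, lap (G (m + 1)) q = 0)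
    (q : Q) : lap (G (m + 2)) q = 0 := by
  have hT : ContDiff ℝ ⊤ (fun x : Q => x + star x) := contDiff_id.add contDiff_star'
  have hS : ContDiff ℝ ⊤ (fun x : Q => star x * x) := contDiff_star'.mul contDiff_id
  have hG1 := contDiff_G (m + 1)
  have hG0 := contDiff_G m
  have dG1 : ∀ (e : Q), ContDiff ℝ ⊤ (dd e (G (m + 1))) := fun e => dd_contDiff hG1 e
  have dG0 : ∀ (e : Q), ContDiff ℝ ⊤ (dd e (G m)) := fun e => dd_contDiff hG0 e
  have main : ∀ e : Q, dd e (dd e (G (m + 2))) q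
      = ((e + star e) * dd e (G (m + 1)) q + ((e + star e) * dd e (G (m + 1)) q
          + (q + star q) * dd e (dd e (G (m + 1))) q))
        - ((star e * e + star e * e) * G m q
          + ((star e * q + star q * e) * dd e (G m) q
          + ((star e * q + star q * e) * dd e (G m) q
          + (star q * q) * dd e (dd e (G m)) q))) := by
    intro e
    have hGfun : G (m + 2) = fun p => (p + star p) * G (m + 1) p - (star p * p) * G m p :=
      funext fun p => G_rec m p
    rw [hGfun]
    have h1 : dd e (fun p => (p + star p) * G (m + 1) p - (star p * p) * G m p)
        = fun p => ((e + star e) * G (m + 1) p + (p + star p) * dd e (G (m + 1)) p)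
            - ((star e * p + star p * e) * G m p + (star p * p) * dd e (G m) p) := by
      funext p
      rw [dd_sub ((hT.differentiable (by simp) p).fun_mul (hG1.differentiable (by simp) p))
        ((hS.differentiable (by simp) p).fun_mul (hG0.differentiable (by simp) p))]
      rw [dd_mul (f := fun x : Q => x + star x) (g := G (m + 1))
        (hT.differentiable (by simp) p) (hG1.differentiable (by simp) p)]
      rw [dd_mul (f := fun x : Q => star x * x) (g := G m)
        (hS.differentiable (by simp) p) (hG0.differentiable (by simp) p)]
      rw [dd_T, dd_S]
    rw [h1]
    have hf1 : ContDiff ℝ ⊤ (fun p : Q => (e + star e) * G (m + 1) p) :=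
      contDiff_const.mul hG1
    have hf2 : ContDiff ℝ ⊤ (fun p : Q => (p + star p) * dd e (G (m + 1)) p) :=
      hT.mul (dG1 e)
    have hf3 : ContDiff ℝ ⊤ (fun p : Q => (star e * p + star p * e) * G m p) :=
      ((contDiff_const.mul contDiff_id).add (contDiff_star'.mul contDiff_const)).mul hG0
    have hf4 : ContDiff ℝ ⊤ (fun p : Q => (star p * p) * dd e (G m) p) :=
      hS.mul (dG0 e)
    rw [dd_sub ((hf1.differentiable (by simp) q).fun_add (hf2.differentiable (by simp) q))
      ((hf3.differentiable (by simp) q).fun_add (hf4.differentiable (by simp) q))]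
    rw [dd_add (hf1.differentiable (by simp) q) (hf2.differentiable (by simp) q)]
    rw [dd_add (hf3.differentiable (by simp) q) (hf4.differentiable (by simp) q)]
    rw [dd_const_mul ((hG1.differentiable (by simp)).differentiableAt) (e + star e) e]
    rw [dd_mul (f := fun x : Q => x + star x) (g := dd e (G (m + 1)))
      (hT.differentiable (by simp) q) ((dG1 e).differentiable (by simp) q)]
    rw [dd_mul (f := fun p : Q => star e * p + star p * e) (g := G m)
      (((differentiableAt_fun_id).const_mul (star e)).fun_add
        ((differentiable_star'.differentiableAt).mul_const e))
      (hG0.differentiable (by simp) q)]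
    rw [dd_mul (f := fun x : Q => star x * x) (g := dd e (G m))
      (hS.differentiable (by simp) q) ((dG0 e).differentiable (by simp) q)]
    rw [dd_T, dd_S]
    have hde : dd e (fun p : Q => star e * p + star p * e) q = star e * e + star e * e := by
      rw [dd_add ((differentiableAt_fun_id).const_mul (star e))
        ((differentiable_star'.differentiableAt).mul_const e)]
      rw [dd_const_mul differentiableAt_fun_id (star e) e, dd_id]
      rw [dd_mul_const (differentiable_star'.differentiableAt) e e, dd_star]
    rw [hde]
    abel
  -- abbreviations
  have hz1 : dd 1 (dd 1 (G (m + 1))) q + dd qI (dd qI (G (m + 1))) q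
      + dd qJ (dd qJ (G (m + 1))) q + dd qK (dd qK (G (m + 1))) q = 0 := ih1 q
  have hz0 : dd 1 (dd 1 (G m)) q + dd qI (dd qI (G m)) q
      + dd qJ (dd qJ (G m)) q + dd qK (dd qK (G m)) q = 0 := ih0 q
  have hlin : q.re • dd 1 (G m) q + q.imI • dd qI (G m) q + q.imJ • dd qJ (G m) q
      + q.imK • dd qK (G m) q = dd q (G m) q := by
    show q.re • fderiv ℝ (G m) q 1 + q.imI • fderiv ℝ (G m) q qI + q.imJ • fderiv ℝ (G m) q qJ
        + q.imK • fderiv ℝ (G m) q qK = fderiv ℝ (G m) q q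
    have hmap : fderiv ℝ (G m) q (q.re • (1:Q) + q.imI • qI + q.imJ • qJ + q.imK • qK)
        = q.re • fderiv ℝ (G m) q 1 + q.imI • fderiv ℝ (G m) q qI
          + q.imJ • fderiv ℝ (G m) q qJ + q.imK • fderiv ℝ (G m) q qK := by
      rw [map_add, map_add, map_add, map_smul, map_smul, map_smul, map_smul]
    rw [← hmap, decomp q]
  have hmid : ((2 * q.re : ℝ) : Q) * dd 1 (G m) q + ((2 * q.imI : ℝ) : Q) * dd qI (G m) q
      + ((2 * q.imJ : ℝ) : Q) * dd qJ (G m) q + ((2 * q.imK : ℝ) : Q) * dd qK (G m) q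
      = m • G m q + m • G m q := by
    rw [coe_mul_eq_smul, coe_mul_eq_smul, coe_mul_eq_smul, coe_mul_eq_smul]
    have htwo : ∀ (r : ℝ) (x : Q), (2 * r) • x = r • x + r • x := by
      intro r x
      rw [two_mul, add_smul]
    rw [htwo, htwo, htwo, htwo]
    have : q.re • dd 1 (G m) q + q.re • dd 1 (G m) q
        + (q.imI • dd qI (G m) q + q.imI • dd qI (G m) q)
        + (q.imJ • dd qJ (G m) q + q.imJ • dd qJ (G m) q)
        + (q.imK • dd qK (G m) q + q.imK • dd qK (G m) q)
        = (q.re • dd 1 (G m) q + q.imI • dd qI (G m) q + q.imJ • dd qJ (G m) q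
            + q.imK • dd qK (G m) q)
          + (q.re • dd 1 (G m) q + q.imI • dd qI (G m) q + q.imJ • dd qJ (G m) q
            + q.imK • dd qK (G m) q) := by abel
    rw [this, hlin, euler_G]
  calc lap (G (m + 2)) q
      = (2 * ((m + 2) • G m q) + (2 * ((m + 2) • G m q)
          + (q + star q) * (dd 1 (dd 1 (G (m + 1))) q + dd qI (dd qI (G (m + 1))) q
            + dd qJ (dd qJ (G (m + 1))) q + dd qK (dd qK (G (m + 1))) q)))
        - ((2 * G m q + 2 * G m q + 2 * G m q + 2 * G m q)
          + ((((2 * q.re : ℝ) : Q) * dd 1 (G m) q + ((2 * q.imI : ℝ) : Q) * dd qI (G m) q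
            + ((2 * q.imJ : ℝ) : Q) * dd qJ (G m) q + ((2 * q.imK : ℝ) : Q) * dd qK (G m) q)
          + ((((2 * q.re : ℝ) : Q) * dd 1 (G m) q + ((2 * q.imI : ℝ) : Q) * dd qI (G m) q
            + ((2 * q.imJ : ℝ) : Q) * dd qJ (G m) q + ((2 * q.imK : ℝ) : Q) * dd qK (G m) q)
          + (star q * q) * (dd 1 (dd 1 (G m)) q + dd qI (dd qI (G m)) q
            + dd qJ (dd qJ (G m)) q + dd qK (dd qK (G m)) q)))) := by
        show dd 1 (dd 1 (G (m + 2))) q + dd qI (dd qI (G (m + 2))) q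
            + dd qJ (dd qJ (G (m + 2))) q + dd qK (dd qK (G (m + 2))) q = _
        rw [main 1, main qI, main qJ, main qK]
        rw [trace_one, trace_I, trace_J, trace_K]
        rw [star_mul_unit_one q, star_mul_unit_I q, star_mul_unit_J q, star_mul_unit_K q]
        rw [unit_norm_I, unit_norm_J, unit_norm_K]
        rw [star_one, one_mul, one_add_one_eq_two]
        rw [dd1_G]
        simp only [zero_mul, mul_add, add_zero, zero_add]
        abel
    _ = 0 := by
        rw [hz1, hz0, hmid, mul_zero, mul_zero]
        simp only [nsmul_eq_mul]
        push_cast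
        noncomm_ring

lemma lap_G_zero : ∀ (m : ℕ) (q : Q), lap (G m) q = 0 := by
  have key : ∀ m, (∀ q, lap (G m) q = 0) ∧ (∀ q, lap (G (m + 1)) q = 0) := by
    intro m
    induction m with
    | zero => exact ⟨lap_G0, lap_G1⟩
    | succ n ih => exact ⟨ih.2, lap_G_succ n ih.1 ih.2⟩
  exact fun m => (key m).1
lemma dd_nsmul {q : Q} {f : Q → Q} (hf : DifferentiableAt ℝ f q) (a : ℕ) (v : Q) :
    dd v (fun p => a • f p) q = a • dd v f q := by
  simp only [dd, fderiv_fun_const_smul hf a, ContinuousLinearMap.coe_smul', Pi.smul_apply]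

/-- For every `k ≥ 1` and every quaternion `q`, `∂̄(f̃_{k+2})(q) = 2(k+2) f̃_{k+1}(q)`,
where `f̃_n := Δ(q^n)`. -/
theorem cfbar_laplacian_pow (k : ℕ) (hk : 1 ≤ k) (q : ℍ[ℝ]) :
    CFbar (lap (fun p => p ^ (k + 2))) q =
      (2 * ((k : ℍ[ℝ]) + 2)) * lap (fun p => p ^ (k + 1)) q := by
  have hpow : ContDiff ℝ ⊤ (fun p : Q => p ^ (k + 2)) := contDiff_pow' _
  rw [CFbar_lap_comm hpow q]
  have hCF : CFbar (fun p : Q => p ^ (k + 2))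
      = fun p => ((k + 2) * 2) • p ^ (k + 1) + 2 • G (k + 1) p :=
    funext fun p => CFbar_pow (k + 1) p
  rw [hCF]
  have hA : ContDiff ℝ ⊤ (fun p : Q => p ^ (k + 1)) := contDiff_pow' _
  have hB := contDiff_G (k + 1)
  have hstep : ∀ (e : Q) (h h' : Q → Q), ContDiff ℝ ⊤ h → ContDiff ℝ ⊤ h' →
      dd e (fun p => ((k + 2) * 2) • h p + 2 • h' p)
        = fun p => ((k + 2) * 2) • dd e h p + 2 • dd e h' p := by
    intro e h h' hh hh'
    funext p
    rw [dd_add ((hh.differentiable (by simp) p).fun_const_smul (((k : ℕ) + 2) * 2))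
      ((hh'.differentiable (by simp) p).fun_const_smul (2 : ℕ))]
    rw [dd_nsmul (hh.differentiable (by simp) p), dd_nsmul (hh'.differentiable (by simp) p)]
  have hlap : ∀ e : Q,
      dd e (dd e (fun p => ((k + 2) * 2) • p ^ (k + 1) + 2 • G (k + 1) p)) q
        = ((k + 2) * 2) • dd e (dd e (fun p : Q => p ^ (k + 1))) q
          + 2 • dd e (dd e (G (k + 1))) q := by
    intro e
    rw [hstep e _ _ hA hB]
    rw [hstep e _ _ (dd_contDiff hA e) (dd_contDiff hB e)]
  show dd 1 (dd 1 _) q + dd qI (dd qI _) q + dd qJ (dd qJ _) q + dd qK (dd qK _) q = _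
  rw [hlap 1, hlap qI, hlap qJ, hlap qK]
  have hz := lap_G_zero (k + 1)
  have hz1 : dd 1 (dd 1 (G (k + 1))) q + dd qI (dd qI (G (k + 1))) q
      + dd qJ (dd qJ (G (k + 1))) q + dd qK (dd qK (G (k + 1))) q = 0 := hz q
  have hgoal : lap (fun p : Q => p ^ (k + 1)) q
      = dd 1 (dd 1 (fun p : Q => p ^ (k + 1))) q + dd qI (dd qI (fun p : Q => p ^ (k + 1))) q
        + dd qJ (dd qJ (fun p : Q => p ^ (k + 1))) q
        + dd qK (dd qK (fun p : Q => p ^ (k + 1))) q := rfl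
  have collect : ((k + 2) * 2) • dd 1 (dd 1 (fun p : Q => p ^ (k + 1))) q
        + 2 • dd 1 (dd 1 (G (k + 1))) q
      + (((k + 2) * 2) • dd qI (dd qI (fun p : Q => p ^ (k + 1))) q
        + 2 • dd qI (dd qI (G (k + 1))) q)
      + (((k + 2) * 2) • dd qJ (dd qJ (fun p : Q => p ^ (k + 1))) q
        + 2 • dd qJ (dd qJ (G (k + 1))) q)
      + (((k + 2) * 2) • dd qK (dd qK (fun p : Q => p ^ (k + 1))) q
        + 2 • dd qK (dd qK (G (k + 1))) q)
      = ((k + 2) * 2) • (dd 1 (dd 1 (fun p : Q => p ^ (k + 1))) q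
          + dd qI (dd qI (fun p : Q => p ^ (k + 1))) q
          + dd qJ (dd qJ (fun p : Q => p ^ (k + 1))) q
          + dd qK (dd qK (fun p : Q => p ^ (k + 1))) q)
        + 2 • (dd 1 (dd 1 (G (k + 1))) q + dd qI (dd qI (G (k + 1))) q
          + dd qJ (dd qJ (G (k + 1))) q + dd qK (dd qK (G (k + 1))) q) := by
    rw [smul_add, smul_add, smul_add, smul_add, smul_add, smul_add]
    abel
  rw [collect, hz1, hgoal]
  rw [show ((k : ℕ) + 2) * 2 = 2 * (k + 2) from Nat.mul_comm _ _]
  rw [nsmul_eq_mul]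
  push_cast
  simp
end
end

section
/- For every quaternion q and every integer k ≥ 0, the Fock–Fueter kernel reproduces the polynomials Q_k through the Gaussian integral over the complex slice: (1/π) ∫_{ℂ} K_𝓕(q, ι(z)) · ι(z)^{k+2} · e^{−|z|²} dA(z) = −2(k+1)(k+2) Q_k(q), where dA is Lebesgue (area) measure on ℂ and ι : ℂ → ℍ is the embedding ι(z) = Re z + (Im z)·i. -/
open Quaternion

noncomputable section

/-- The coefficients `T^k_j = 2(k−j+1)/((k+1)(k+2))`. -/
def T (k j : ℕ) : ℝ := 2 * ((k : ℝ) - j + 1) / (((k : ℝ) + 1) * ((k : ℝ) + 2))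

/-- The Fueter regular polynomials `Q_k(q) = ∑_{j=0}^k T^k_j q^{k−j} (conj q)^j`. -/
def Q (k : ℕ) (q : ℍ[ℝ]) : ℍ[ℝ] :=
  ∑ j ∈ Finset.range (k + 1), ((T k j : ℝ) : ℍ[ℝ]) * (q ^ (k - j) * (star q) ^ j)

/-- The embedding `ι : ℂ → ℍ`, `ι(z) = Re z + (Im z)·i`. -/
def ι (z : ℂ) : ℍ[ℝ] := ⟨z.re, z.im, 0, 0⟩

/-- The Fock–Fueter kernel `K_𝓕(q,p) = −2 ∑_k (Q_k(q)/k!) (conj p)^{k+2}`. -/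
def KF (q p : ℍ[ℝ]) : ℍ[ℝ] :=
  (-2 : ℍ[ℝ]) * ∑' k : ℕ, ((k.factorial : ℝ)⁻¹) • (Q k q * (star p) ^ (k + 2))

/-! ### Auxiliary lemmas -/

open MeasureTheory Real Set

section Aux

/-! #### The embedding `ι` -/

@[simp] lemma ι_re (z : ℂ) : (ι z).re = z.re := rfl
@[simp] lemma ι_imI (z : ℂ) : (ι z).imI = z.im := rfl
@[simp] lemma ι_imJ (z : ℂ) : (ι z).imJ = 0 := rfl
@[simp] lemma ι_imK (z : ℂ) : (ι z).imK = 0 := rfl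

lemma ι_mul (z w : ℂ) : ι (z * w) = ι z * ι w := by
  ext <;> simp [Complex.mul_re, Complex.mul_im] <;> ring

lemma ι_one : ι 1 = 1 := by ext <;> simp

lemma ι_pow (z : ℂ) (n : ℕ) : ι (z ^ n) = (ι z) ^ n := by
  induction n with
  | zero => simpa using ι_one
  | succ n ih => rw [pow_succ, pow_succ, ← ih, ← ι_mul]

lemma star_ι (z : ℂ) : star (ι z) = ι (starRingEnd ℂ z) := by
  ext <;> simp

lemma ι_ofReal (r : ℝ) : ι (r : ℂ) = (r : ℍ[ℝ]) := by
  ext <;> simp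

lemma norm_ι (z : ℂ) : ‖ι z‖ = ‖z‖ := by
  have h : ‖ι z‖ * ‖ι z‖ = ‖z‖ * ‖z‖ := by
    have h2 : ‖z‖ * ‖z‖ = Complex.normSq z := by
      rw [← Complex.sq_norm]; ring
    rw [h2, ← Quaternion.normSq_eq_norm_mul_self, Quaternion.normSq_def',
      Complex.normSq_apply]
    simp [ι]
    ring
  nlinarith [norm_nonneg (ι z), norm_nonneg z, h]

/-- `ι` as a continuous `ℝ`-linear map. -/
def ιL : ℂ →L[ℝ] ℍ[ℝ] :=
  LinearMap.toContinuousLinearMap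
    { toFun := ι
      map_add' := fun z w => by ext <;> simp
      map_smul' := fun r z => by ext <;> simp }

@[simp] lemma ιL_apply (z : ℂ) : ιL z = ι z := rfl

/-! #### The angular and radial integrals -/

lemma angular (n : ℤ) (hn : n ≠ 0) :
    ∫ θ in Ioo (-π) π, Complex.exp ((n : ℂ) * Complex.I * θ) = 0 := by
  rw [← integral_Ioc_eq_integral_Ioo,
    ← intervalIntegral.integral_of_le (by linarith [pi_pos] : -π ≤ π)]
  rw [integral_exp_mul_complex (by simp [hn, Complex.I_ne_zero])]
  have h1 : Complex.exp ((n:ℂ) * Complex.I * π) = (-1 : ℂ) ^ n := by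
    rw [show (n:ℂ) * Complex.I * π = n * (π * Complex.I) by ring, Complex.exp_int_mul,
      Complex.exp_pi_mul_I]
  have h2 : Complex.exp ((n:ℂ) * Complex.I * ((-π : ℝ) : ℂ)) = ((-1 : ℂ) ^ n)⁻¹ := by
    rw [show (n:ℂ) * Complex.I * ((-π : ℝ) : ℂ) = ((-n : ℤ) : ℂ) * (π * Complex.I) by
      push_cast; ring, Complex.exp_int_mul, Complex.exp_pi_mul_I, zpow_neg]
  rw [h1, h2]
  have h3 : ((-1 : ℂ) ^ n)⁻¹ = (-1 : ℂ) ^ n := by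
    refine inv_eq_of_mul_eq_one_right ?_
    rw [← zpow_add₀ (by norm_num : (-1 : ℂ) ≠ 0), show n + n = 2 * n by ring, zpow_mul]
    norm_num
  rw [h3, sub_self, zero_div]

lemma radial (a : ℕ) :
    ∫ r in Ioi (0:ℝ), r ^ (2 * a + 1) * rexp (-r ^ 2) = a.factorial / 2 := by
  have h := integral_rpow_mul_exp_neg_rpow (p := 2) (q := (2 * a + 1 : ℝ))
    (by norm_num) (by push_cast; linarith [Nat.cast_nonneg (α := ℝ) a])
  have he : ∫ r in Ioi (0:ℝ), r ^ (2 * a + 1) * rexp (-r ^ 2)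
      = ∫ x in Ioi (0:ℝ), x ^ (2 * (a:ℝ) + 1) * rexp (-x ^ (2:ℝ)) := by
    refine setIntegral_congr_fun measurableSet_Ioi (fun x hx => ?_)
    rw [show (2 * (a:ℝ) + 1) = ((2 * a + 1 : ℕ) : ℝ) by push_cast; ring,
      Real.rpow_natCast, Real.rpow_two]
  rw [he, h]
  have : ((2 * (a:ℝ) + 1) + 1) / 2 = (a : ℝ) + 1 := by ring
  rw [this, Real.Gamma_nat_eq_factorial]
  ring

/-! #### The Gaussian moments over `ℂ` -/

lemma gauss_moment (a b : ℕ) :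
    ∫ z : ℂ, rexp (-‖z‖ ^ 2) • ((starRingEnd ℂ z) ^ a * z ^ b)
      = if a = b then ((a.factorial : ℂ) * (π : ℂ)) else 0 := by
  rw [← Complex.integral_comp_polarCoord_symm]
  have key : ∀ p ∈ polarCoord.target,
      p.1 • (rexp (-‖Complex.polarCoord.symm p‖ ^ 2) •
        ((starRingEnd ℂ (Complex.polarCoord.symm p)) ^ a * (Complex.polarCoord.symm p) ^ b))
      = ((p.1 : ℂ) ^ (a + b + 1) * (rexp (-p.1 ^ 2) : ℝ)) *
        Complex.exp ((((b:ℤ) - (a:ℤ) : ℤ) : ℂ) * Complex.I * (p.2 : ℝ)) := by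
    rintro ⟨r, θ⟩ hp
    rw [polarCoord_target] at hp
    obtain ⟨hr, -⟩ := hp
    simp only [mem_Ioi] at hr
    have hz : Complex.polarCoord.symm (r, θ) = (r : ℂ) * Complex.exp (θ * Complex.I) := by
      rw [Complex.polarCoord_symm_apply, Complex.exp_mul_I]
      norm_cast
    have habs : ‖Complex.polarCoord.symm (r, θ)‖ = r := by
      rw [Complex.norm_polarCoord_symm]
      exact abs_of_pos hr
    have hconj : (starRingEnd ℂ) (Complex.polarCoord.symm (r, θ))
        = (r : ℂ) * Complex.exp (-(θ * Complex.I)) := by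
      rw [hz, map_mul, Complex.conj_ofReal, ← Complex.exp_conj, map_mul, Complex.conj_ofReal,
        Complex.conj_I, mul_neg]
    rw [habs, hconj, hz]
    rw [mul_pow, mul_pow, ← Complex.exp_nat_mul, ← Complex.exp_nat_mul]
    rw [Complex.real_smul, Complex.real_smul]
    have hee : Complex.exp ((a:ℂ) * -(↑θ * Complex.I)) * Complex.exp ((b:ℂ) * (↑θ * Complex.I))
        = Complex.exp ((((b:ℤ) - (a:ℤ) : ℤ) : ℂ) * Complex.I * (θ : ℝ)) := by
      rw [← Complex.exp_add]
      congr 1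
      push_cast
      ring
    rw [← hee]
    push_cast
    ring
  rw [setIntegral_congr_fun polarCoord.open_target.measurableSet key]
  rw [polarCoord_target, Measure.volume_eq_prod,
    setIntegral_prod_mul (fun r : ℝ => (r:ℂ) ^ (a + b + 1) * ((rexp (-r ^ 2) : ℝ) : ℂ))
      (fun θ : ℝ => Complex.exp ((((b:ℤ) - (a:ℤ) : ℤ) : ℂ) * Complex.I * (θ : ℝ)))]
  by_cases hab : a = b
  · subst hab
    simp only [sub_self, Int.cast_zero, zero_mul, Complex.exp_zero]
    have h1 : (∫ r in Ioi (0:ℝ), (r:ℂ) ^ (a + a + 1) * (rexp (-r ^ 2) : ℝ))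
        = (((a.factorial : ℝ) / 2 : ℝ) : ℂ) := by
      have : (∫ r in Ioi (0:ℝ), (r:ℂ) ^ (a + a + 1) * (rexp (-r ^ 2) : ℝ))
          = ∫ r in Ioi (0:ℝ), ((r ^ (2 * a + 1) * rexp (-r ^ 2) : ℝ) : ℂ) := by
        refine setIntegral_congr_fun measurableSet_Ioi (fun x hx => ?_)
        push_cast
        ring_nf
      rw [this, show (∫ r in Ioi (0:ℝ), ((r ^ (2 * a + 1) * rexp (-r ^ 2) : ℝ) : ℂ))
          = (((∫ r in Ioi (0:ℝ), r ^ (2 * a + 1) * rexp (-r ^ 2)) : ℝ) : ℂ) from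
        integral_ofReal, radial a]
    have h2 : (∫ _ in Ioo (-π) π, (1:ℂ)) = ((2 * π : ℝ) : ℂ) := by
      rw [setIntegral_const, Real.volume_real_Ioo_of_le (by linarith [pi_pos] : -π ≤ π), sub_neg_eq_add,
        Complex.real_smul]
      push_cast
      ring
    rw [h1, h2]
    rw [if_pos trivial]
    push_cast
    ring
  · rw [angular _ (by
      intro h
      rw [sub_eq_zero] at h
      exact hab (by exact_mod_cast h.symm)), mul_zero]
    rw [if_neg hab]

/-! #### Integrability lemmas -/

lemma integrable_gauss_half : Integrable (fun z : ℂ => rexp (-(1/2) * ‖z‖ ^ 2)) := by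
  have h := (GaussianFourier.integrable_cexp_neg_mul_sq_norm_add (V := ℂ)
    (b := ((1:ℝ)/2 : ℂ)) (by norm_num) 0 0).norm
  convert h using 2 with z
  simp [Complex.norm_exp]
  norm_cast

lemma pow_gauss_le (n : ℕ) (x : ℝ) (hx : 0 ≤ x) :
    x ^ n * rexp (-x ^ 2) ≤ ((n.factorial : ℝ) * rexp (1/2)) * rexp (-(1/2) * x ^ 2) := by
  have h1 : x ^ n ≤ n.factorial * rexp x := by
    have := Real.pow_div_factorial_le_exp (x := x) hx n
    rw [div_le_iff₀ (by positivity : (0:ℝ) < n.factorial)] at this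
    linarith [this]
  calc x ^ n * rexp (-x ^ 2) ≤ (n.factorial * rexp x) * rexp (-x ^ 2) := by
        exact mul_le_mul_of_nonneg_right h1 (exp_nonneg _)
    _ = n.factorial * rexp (x - x ^ 2) := by rw [mul_assoc, ← Real.exp_add]; ring_nf
    _ ≤ ((n.factorial : ℝ) * rexp (1/2)) * rexp (-(1/2) * x ^ 2) := by
        rw [mul_assoc, ← Real.exp_add]
        refine mul_le_mul_of_nonneg_left
          (Real.exp_le_exp.2 (by nlinarith [sq_nonneg (x - 1)])) (by positivity)

lemma pow_gauss_le' (N : ℕ) (x : ℝ) (hx : 0 ≤ x) :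
    x ^ N * rexp (-x ^ 2)
      ≤ (1 + 2 ^ ((N+1)/2) * (((N+1)/2).factorial : ℝ)) * rexp (-(1/2) * x ^ 2) := by
  set s := (N + 1) / 2 with hs
  have hsn : N ≤ 2 * s := by omega
  have hpos : (0:ℝ) ≤ 2 ^ s * (s.factorial : ℝ) := by positivity
  rcases le_or_gt x 1 with hx1 | hx1
  · have h1 : x ^ N ≤ 1 := pow_le_one₀ hx hx1
    have h2 : rexp (-x ^ 2) ≤ rexp (-(1/2) * x ^ 2) := Real.exp_le_exp.2 (by nlinarith)
    calc x ^ N * rexp (-x ^ 2) ≤ 1 * rexp (-(1/2) * x ^ 2) := by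
          exact mul_le_mul h1 h2 (exp_nonneg _) zero_le_one
      _ ≤ _ := by
          rw [one_mul]
          refine le_mul_of_one_le_left (exp_nonneg _) (by linarith)
  · have h1 : x ^ N ≤ x ^ (2 * s) := pow_le_pow_right₀ hx1.le hsn
    have h2 : x ^ (2 * s) ≤ 2 ^ s * (s.factorial : ℝ) * rexp (x ^ 2 / 2) := by
      have hd : x ^ (2 * s) = 2 ^ s * (x ^ 2 / 2) ^ s := by
        rw [pow_mul, ← mul_pow]
        ring_nf
      rw [hd]
      have := Real.pow_div_factorial_le_exp (x := x ^ 2 / 2) (by positivity) s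
      rw [div_le_iff₀ (by positivity : (0:ℝ) < s.factorial)] at this
      calc 2 ^ s * (x ^ 2 / 2) ^ s ≤ 2 ^ s * (rexp (x ^ 2 / 2) * s.factorial) := by
            exact mul_le_mul_of_nonneg_left this (by positivity)
        _ = 2 ^ s * (s.factorial : ℝ) * rexp (x ^ 2 / 2) := by ring
    calc x ^ N * rexp (-x ^ 2)
        ≤ (2 ^ s * (s.factorial : ℝ) * rexp (x ^ 2 / 2)) * rexp (-x ^ 2) := by
          exact mul_le_mul_of_nonneg_right (h1.trans h2) (exp_nonneg _)
      _ = 2 ^ s * (s.factorial : ℝ) * rexp (-(1/2) * x ^ 2) := by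
          rw [mul_assoc, ← Real.exp_add]
          ring_nf
      _ ≤ _ := by
          refine mul_le_mul_of_nonneg_right (by linarith) (exp_nonneg _)

lemma integrable_pow_gauss (n : ℕ) :
    Integrable (fun z : ℂ => ‖z‖ ^ n * rexp (-‖z‖ ^ 2)) := by
  refine (integrable_gauss_half.const_mul ((n.factorial : ℝ) * rexp (1/2))).mono' ?_ ?_
  · exact (Continuous.mul (by continuity) (by continuity)).aestronglyMeasurable
  · refine Filter.Eventually.of_forall (fun z => ?_)
    rw [Real.norm_eq_abs, abs_of_nonneg (by positivity)]
    simpa using pow_gauss_le n (‖z‖) (norm_nonneg z)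

lemma integrable_moment (a b : ℕ) :
    Integrable (fun z : ℂ => rexp (-‖z‖ ^ 2) • ((starRingEnd ℂ z) ^ a * z ^ b)) := by
  refine (integrable_pow_gauss (a + b)).mono' ?_ ?_
  · refine Continuous.aestronglyMeasurable ?_
    continuity
  · refine Filter.Eventually.of_forall (fun z => ?_)
    rw [norm_smul, Real.norm_eq_abs, abs_of_nonneg (exp_nonneg _), norm_mul, norm_pow, norm_pow]
    simp only [Complex.norm_conj]
    rw [← pow_add]
    ring_nf
    exact le_refl _

/-! #### Summability lemmas -/

lemma sumKey (x : ℝ) (hx : 0 ≤ x) (c d : ℕ) :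
    Summable (fun t : ℕ => x ^ (2 * t + d) * ((t + c).factorial : ℝ) / (2 * t + d).factorial) := by
  rw [← summable_nat_add_iff c]
  have hle : ∀ t : ℕ, x ^ (2 * (t + c) + d) * (((t + c) + c).factorial : ℝ)
      / (2 * (t + c) + d).factorial ≤ x ^ (2 * c + d) * ((x ^ 2) ^ t / t.factorial) := by
    intro t
    have hfac : (t.factorial : ℝ) * ((t + 2 * c).factorial : ℝ)
        ≤ ((2 * (t + c) + d).factorial : ℝ) := by
      have h1 : t.factorial * (t + 2 * c).factorial ≤ (t + (t + 2 * c)).factorial :=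
        Nat.le_of_dvd (Nat.factorial_pos _) (Nat.factorial_mul_factorial_dvd_factorial_add _ _)
      have h2 : (t + (t + 2 * c)).factorial ≤ (2 * (t + c) + d).factorial :=
        Nat.factorial_le (by omega)
      exact_mod_cast h1.trans h2
    have hpow : x ^ (2 * (t + c) + d) = x ^ (2 * c + d) * (x ^ 2) ^ t := by
      rw [← pow_mul, ← pow_add]
      ring_nf
    rw [hpow, show (t + c) + c = t + 2 * c by ring, mul_assoc, mul_div_assoc]
    refine mul_le_mul_of_nonneg_left ?_ (by positivity)
    rw [div_le_div_iff₀ (by positivity) (by positivity)]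
    calc (x ^ 2) ^ t * (t + 2 * c).factorial * t.factorial
        = (x ^ 2) ^ t * ((t.factorial : ℝ) * (t + 2 * c).factorial) := by ring
      _ ≤ (x ^ 2) ^ t * ((2 * (t + c) + d).factorial : ℝ) := by
          exact mul_le_mul_of_nonneg_left hfac (by positivity)
      _ = _ := by ring
  refine Summable.of_nonneg_of_le (fun t => by positivity) hle ?_
  exact ((Real.summable_pow_div_factorial (x ^ 2)).mul_left _)

lemma sumAux (x : ℝ) (hx : 0 ≤ x) (c : ℕ) :
    Summable (fun m : ℕ => x ^ m * ((m / 2 + c).factorial : ℝ) / m.factorial) := by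
  refine Summable.even_add_odd ?_ ?_
  · have h := sumKey x hx c 0
    refine h.congr (fun t => ?_)
    norm_num [Nat.mul_div_cancel_left t (by norm_num : 0 < 2)]
  · have h := sumKey x hx c 1
    refine h.congr (fun t => ?_)
    have : (2 * t + 1) / 2 = t := by omega
    rw [this]

/-! #### Bounds on `T` and `Q` -/

lemma T_nonneg {k j : ℕ} (hj : j ≤ k) : 0 ≤ T k j := by
  have hjk : (j : ℝ) ≤ k := by exact_mod_cast hj
  refine div_nonneg (by linarith) (by positivity)

lemma T_abs_le {k j : ℕ} (hj : j ≤ k) : |T k j| ≤ 1 := by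
  have hjk : (j : ℝ) ≤ k := by exact_mod_cast hj
  rw [abs_of_nonneg (T_nonneg hj), T, div_le_one (by positivity)]
  nlinarith [Nat.cast_nonneg (α := ℝ) j, Nat.cast_nonneg (α := ℝ) k]

lemma normQ (k : ℕ) (q : ℍ[ℝ]) : ‖Q k q‖ ≤ ((k:ℝ) + 1) * ‖q‖ ^ k := by
  calc ‖Q k q‖ ≤ ∑ j ∈ Finset.range (k + 1), ‖((T k j : ℝ) : ℍ[ℝ]) * (q ^ (k - j) * (star q) ^ j)‖ :=
        norm_sum_le _ _
    _ ≤ ∑ _j ∈ Finset.range (k + 1), ‖q‖ ^ k := by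
        refine Finset.sum_le_sum (fun j hj => ?_)
        rw [Finset.mem_range, Nat.lt_succ_iff] at hj
        rw [norm_mul, norm_mul, norm_pow, norm_pow, Quaternion.norm_star, Quaternion.norm_coe,
          ← pow_add, Nat.sub_add_cancel hj, Real.norm_eq_abs]
        calc |T k j| * ‖q‖ ^ k ≤ 1 * ‖q‖ ^ k :=
              mul_le_mul_of_nonneg_right (T_abs_le hj) (by positivity)
          _ = ‖q‖ ^ k := one_mul _
    _ = ((k:ℝ) + 1) * ‖q‖ ^ k := by
        rw [Finset.sum_const, Finset.card_range, nsmul_eq_mul]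
        push_cast
        ring

/-! #### Abbreviations for the main proof -/

/-- The coefficient `−2 (m!)⁻¹ Q_m(q)`. -/
def cQ (q : ℍ[ℝ]) (m : ℕ) : ℍ[ℝ] := (-2 : ℍ[ℝ]) * (((m.factorial : ℝ))⁻¹ • Q m q)

/-- The summands of the expansion of the integrand. -/
def FD (q : ℍ[ℝ]) (k m : ℕ) (z : ℂ) : ℍ[ℝ] :=
  Real.exp (-‖z‖ ^ 2) • (cQ q m * ι ((starRingEnd ℂ z) ^ (m + 2) * z ^ (k + 2)))

/-- Left multiplication by `cQ q m` composed with `ι`, as a continuous linear map. -/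
def LD (q : ℍ[ℝ]) (m : ℕ) : ℂ →L[ℝ] ℍ[ℝ] :=
  (ContinuousLinearMap.mul ℝ ℍ[ℝ] (cQ q m)).comp ιL

lemma LD_apply (q : ℍ[ℝ]) (m : ℕ) (w : ℂ) : LD q m w = cQ q m * ι w := rfl

lemma FD_eq_LD (q : ℍ[ℝ]) (k m : ℕ) (z : ℂ) :
    FD q k m z
      = LD q m (Real.exp (-‖z‖ ^ 2) • ((starRingEnd ℂ z) ^ (m + 2) * z ^ (k + 2))) := by
  rw [(LD q m).map_smul, LD_apply, FD]

lemma cQ_norm_le (q : ℍ[ℝ]) (m : ℕ) :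
    ‖cQ q m‖ ≤ 2 * ((m.factorial : ℝ))⁻¹ * (((m:ℝ) + 1) * ‖q‖ ^ m) := by
  have h2 : ‖(-2 : ℍ[ℝ])‖ = 2 := by
    rw [norm_neg, show (2 : ℍ[ℝ]) = ((2:ℝ) : ℍ[ℝ]) by norm_cast, Quaternion.norm_coe]
    norm_num
  rw [cQ, norm_mul, h2, norm_smul, Real.norm_eq_abs,
    abs_of_nonneg (by positivity : (0:ℝ) ≤ ((m.factorial : ℝ))⁻¹)]
  have hq := normQ m q
  have hfp : (0:ℝ) ≤ ((m.factorial : ℝ))⁻¹ := by positivity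
  calc 2 * (((m.factorial : ℝ))⁻¹ * ‖Q m q‖)
      ≤ 2 * (((m.factorial : ℝ))⁻¹ * (((m:ℝ) + 1) * ‖q‖ ^ m)) := by
        refine mul_le_mul_of_nonneg_left (mul_le_mul_of_nonneg_left hq hfp) (by norm_num)
    _ = 2 * ((m.factorial : ℝ))⁻¹ * (((m:ℝ) + 1) * ‖q‖ ^ m) := by ring

end Aux

/-- Integral representation of `Q_k` against the Fock–Fueter kernel over a complex slice:
`(1/π) ∫_ℂ K_𝓕(q,ι z) (ι z)^{k+2} e^{−|z|²} dA(z) = −2(k+1)(k+2) Q_k(q)`. -/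
theorem integral_rep_Q_fockFueter (q : ℍ[ℝ]) (k : ℕ) :
    (Real.pi)⁻¹ •
        ∫ z : ℂ, Real.exp (-‖z‖ ^ 2) • (KF q (ι z) * (ι z) ^ (k + 2)) =
      (-2 * ((k : ℍ[ℝ]) + 1) * ((k : ℍ[ℝ]) + 2)) * Q k q := by
  classical
  -- pointwise expansion of the integrand as a series
  have hpt : ∀ z : ℂ,
      Real.exp (-‖z‖ ^ 2) • (KF q (ι z) * (ι z) ^ (k + 2)) = ∑' m, FD q k m z := by
    intro z
    rw [← Quaternion.coe_mul_eq_smul, KF, mul_assoc, ← tsum_mul_right, ← tsum_mul_left,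
      ← tsum_mul_left]
    refine tsum_congr (fun m => ?_)
    rw [FD, cQ, ι_mul, ι_pow, ι_pow, ← star_ι]
    simp only [← Quaternion.coe_mul_eq_smul]
    simp only [mul_assoc]
  -- measurability
  have hmeas : ∀ m, AEStronglyMeasurable (FD q k m) volume := by
    intro m
    have hg : Continuous fun z : ℂ => (starRingEnd ℂ z) ^ (m + 2) * z ^ (k + 2) :=
      (Complex.continuous_conj.pow _).mul (continuous_pow _)
    have he : Continuous fun z : ℂ => Real.exp (-‖z‖ ^ 2) :=
      Real.continuous_exp.comp ((continuous_norm.pow 2).neg)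
    exact (he.smul (continuous_const.mul (ιL.continuous.comp hg))).aestronglyMeasurable
  -- norm bound
  set s : ℕ → ℕ := fun m => (m + k + 4 + 1) / 2 with hsdef
  set C : ℕ → ℝ := fun m =>
    (2 * ((m.factorial : ℝ))⁻¹ * (((m:ℝ) + 1) * ‖q‖ ^ m)) *
      (1 + 2 ^ (s m) * ((s m).factorial : ℝ)) with hCdef
  have hCval : ∀ m, C m = (2 * ((m.factorial : ℝ))⁻¹ * (((m:ℝ) + 1) * ‖q‖ ^ m)) *
      (1 + 2 ^ ((m + k + 4 + 1) / 2) * ((((m + k + 4 + 1) / 2)).factorial : ℝ)) :=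
    fun m => rfl
  have hCnn : ∀ m, 0 ≤ C m := by
    intro m
    rw [hCval]
    have := norm_nonneg q
    positivity
  have hFle : ∀ m z, ‖FD q k m z‖ ≤ C m * rexp (-(1/2) * ‖z‖ ^ 2) := by
    intro m z
    have hι : ‖ι ((starRingEnd ℂ z) ^ (m + 2) * z ^ (k + 2))‖
        = ‖z‖ ^ (m + k + 4) := by
      rw [norm_ι, norm_mul, norm_pow, norm_pow, Complex.norm_conj, ← pow_add]
      congr 1
      omega
    rw [FD, norm_smul, Real.norm_eq_abs, abs_of_nonneg (exp_nonneg _), norm_mul, hι]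
    have hmom := pow_gauss_le' (m + k + 4) (‖z‖) (norm_nonneg z)
    have hzn : ‖z‖ = ‖z‖ := rfl
    rw [hzn, hCval]
    calc rexp (-‖z‖ ^ 2) * (‖cQ q m‖ * ‖z‖ ^ (m + k + 4))
        = ‖cQ q m‖ * (‖z‖ ^ (m + k + 4) * rexp (-‖z‖ ^ 2)) := by ring
      _ ≤ (2 * ((m.factorial : ℝ))⁻¹ * (((m:ℝ) + 1) * ‖q‖ ^ m)) *
            ((1 + 2 ^ ((m + k + 4 + 1) / 2) * ((((m + k + 4 + 1) / 2)).factorial : ℝ)) *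
              rexp (-(1/2) * ‖z‖ ^ 2)) := by
          refine mul_le_mul (cQ_norm_le q m) hmom (by positivity) ?_
          have := norm_nonneg q
          positivity
      _ = _ := by ring
  -- summability of the constants
  have hsumC : Summable C := by
    have hx : (0:ℝ) ≤ 4 * ‖q‖ := by positivity
    refine Summable.of_nonneg_of_le hCnn (fun m => ?_)
      ((sumAux (4 * ‖q‖) hx (k + 6)).mul_left ((2:ℝ) ^ (k + 9)))
    have h1 : ((m:ℝ) + 1) ≤ 2 ^ m * 2 := by
      have h := (Nat.lt_two_pow_self (n := m + 1)).le
      have h' : ((m+1 : ℕ) : ℝ) ≤ ((2 ^ (m+1) : ℕ) : ℝ) := by exact_mod_cast h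
      push_cast at h'
      rw [pow_succ] at h'
      push_cast
      linarith
    have h2 : (m + k + 4 + 1) / 2 ≤ m / 2 + (k + 6) := by omega
    have h3 : ((((m + k + 4 + 1) / 2)).factorial : ℝ)
        ≤ ((m / 2 + (k + 6)).factorial : ℝ) := by
      exact_mod_cast Nat.factorial_le h2
    have h4 : (m + k + 4 + 1) / 2 ≤ m + (k + 6) := by omega
    have h5 : (2:ℝ) ^ ((m + k + 4 + 1) / 2) ≤ 2 ^ (m + (k + 6)) :=
      pow_le_pow_right₀ one_le_two h4
    have h6 : (1:ℝ) ≤ ((m / 2 + (k + 6)).factorial : ℝ) := by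
      exact_mod_cast Nat.one_le_iff_ne_zero.2 (Nat.factorial_ne_zero _)
    have h7 : (1:ℝ) + 2 ^ ((m + k + 4 + 1) / 2) * ((((m + k + 4 + 1) / 2)).factorial : ℝ)
        ≤ 2 ^ (m + (k + 6)) * (2 * ((m / 2 + (k + 6)).factorial : ℝ)) := by
      have ha : (2:ℝ) ^ ((m + k + 4 + 1) / 2) * ((((m + k + 4 + 1) / 2)).factorial : ℝ)
          ≤ 2 ^ (m + (k + 6)) * ((m / 2 + (k + 6)).factorial : ℝ) :=
        mul_le_mul h5 h3 (by positivity) (by positivity)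
      have hb : (1:ℝ) ≤ 2 ^ (m + (k + 6)) * ((m / 2 + (k + 6)).factorial : ℝ) := by
        have hp : (1:ℝ) ≤ 2 ^ (m + (k + 6)) := one_le_pow₀ one_le_two
        nlinarith
      linarith
    have hfp : (0:ℝ) < (m.factorial : ℝ) := by positivity
    calc C m = (2 * (((m:ℝ) + 1) * ‖q‖ ^ m)) *
          (1 + 2 ^ ((m + k + 4 + 1) / 2) * ((((m + k + 4 + 1) / 2)).factorial : ℝ))
          / (m.factorial : ℝ) := by rw [hCval]; ring
      _ ≤ (2 * ((2 ^ m * 2) * ‖q‖ ^ m)) *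
            (2 ^ (m + (k + 6)) * (2 * ((m / 2 + (k + 6)).factorial : ℝ)))
          / (m.factorial : ℝ) := by
          have hqm : (0:ℝ) ≤ ‖q‖ ^ m := by positivity
          gcongr
      _ = (2:ℝ) ^ (k + 9) *
            ((4 * ‖q‖) ^ m * ((m / 2 + (k + 6)).factorial : ℝ) / (m.factorial : ℝ)) := by
          rw [pow_add, mul_pow, show ((4:ℝ)) ^ m = 2 ^ m * 2 ^ m by
            rw [← mul_pow]; norm_num]
          ring
  -- the series of lintegrals is finite
  have hGi : Integrable (fun z : ℂ => rexp (-(1/2) * ‖z‖ ^ 2)) := integrable_gauss_half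
  set G : ℝ := ∫ z : ℂ, rexp (-(1/2) * ‖z‖ ^ 2) with hGdef
  have hGnn : 0 ≤ G := integral_nonneg (fun z => exp_nonneg _)
  have hlint : ∀ m, ∫⁻ z : ℂ, ‖FD q k m z‖ₑ ≤ ENNReal.ofReal (C m * G) := by
    intro m
    have hint : Integrable (fun z : ℂ => C m * rexp (-(1/2) * ‖z‖ ^ 2)) := hGi.const_mul _
    calc ∫⁻ z : ℂ, (‖FD q k m z‖ₑ : ENNReal)
        = ∫⁻ z : ℂ, ENNReal.ofReal ‖FD q k m z‖ := by
          simp_rw [ofReal_norm]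
      _ ≤ ∫⁻ z : ℂ, ENNReal.ofReal (C m * rexp (-(1/2) * ‖z‖ ^ 2)) :=
          lintegral_mono (fun z => ENNReal.ofReal_le_ofReal (hFle m z))
      _ = ENNReal.ofReal (∫ z : ℂ, C m * rexp (-(1/2) * ‖z‖ ^ 2)) :=
          (ofReal_integral_eq_lintegral_ofReal hint
            (Filter.Eventually.of_forall (fun z => by positivity))).symm
      _ = ENNReal.ofReal (C m * G) := by
          rw [integral_const_mul]
  have hlsum : ∑' m, ∫⁻ z : ℂ, ‖FD q k m z‖ₑ ≠ ⊤ := by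
    have hCG : Summable (fun m => C m * G) := hsumC.mul_right G
    have hle : ∑' m, ∫⁻ z : ℂ, ‖FD q k m z‖ₑ ≤ ENNReal.ofReal (∑' m, C m * G) := by
      calc ∑' m, ∫⁻ z : ℂ, ‖FD q k m z‖ₑ ≤ ∑' m, ENNReal.ofReal (C m * G) :=
            ENNReal.tsum_le_tsum hlint
        _ = ENNReal.ofReal (∑' m, C m * G) :=
            (ENNReal.ofReal_tsum_of_nonneg (fun m => mul_nonneg (hCnn m) hGnn) hCG).symm
    exact ne_top_of_le_ne_top ENNReal.ofReal_ne_top hle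
  -- exchange integral and sum
  have hInt : (∫ z : ℂ, Real.exp (-‖z‖ ^ 2) • (KF q (ι z) * (ι z) ^ (k + 2)))
      = ∑' m, ∫ z : ℂ, FD q k m z := by
    rw [show (fun z : ℂ => Real.exp (-‖z‖ ^ 2) • (KF q (ι z) * (ι z) ^ (k + 2)))
        = fun z : ℂ => ∑' m, FD q k m z from funext hpt]
    exact integral_tsum hmeas hlsum
  -- evaluation of each integral
  have hIm : ∀ m, (∫ z : ℂ, FD q k m z)
      = LD q m (if m + 2 = k + 2 then (((m+2).factorial : ℂ) * (π : ℂ)) else 0) := by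
    intro m
    rw [show (fun z : ℂ => FD q k m z) = fun z : ℂ =>
        LD q m (Real.exp (-‖z‖ ^ 2) • ((starRingEnd ℂ z) ^ (m + 2) * z ^ (k + 2)))
      from funext (FD_eq_LD q k m)]
    rw [ContinuousLinearMap.integral_comp_comm (LD q m) (integrable_moment (m + 2) (k + 2)),
      gauss_moment]
  have hsum2 : ∑' m, ∫ z : ℂ, FD q k m z = cQ q k * ι (((k+2).factorial : ℂ) * (π : ℂ)) := by
    rw [tsum_eq_single k (fun m hm => by
      rw [hIm m, if_neg (by omega), map_zero])]
    rw [hIm k, if_pos rfl, LD_apply]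
  rw [hInt, hsum2]
  -- final computation
  have hc : (((k+2).factorial : ℂ) * (π : ℂ)) = ((((k+2).factorial : ℝ) * π : ℝ) : ℂ) := by
    push_cast
    ring
  rw [hc, ι_ofReal, Quaternion.mul_coe_eq_smul, smul_smul, cQ]
  have hcast1 : ((k : ℍ[ℝ]) + 1) = ((((k:ℝ) + 1) : ℝ) : ℍ[ℝ]) := by
    norm_cast
  have hcast2 : ((k : ℍ[ℝ]) + 2) = ((((k:ℝ) + 2) : ℝ) : ℍ[ℝ]) := by
    norm_cast
  have hRHS : (-2 * ((k : ℍ[ℝ]) + 1) * ((k : ℍ[ℝ]) + 2)) * Q k q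
      = (((k:ℝ) + 1) * ((k:ℝ) + 2)) • ((-2 : ℍ[ℝ]) * Q k q) := by
    rw [mul_assoc, mul_assoc, hcast1, hcast2, Quaternion.coe_mul_eq_smul,
      Quaternion.coe_mul_eq_smul, mul_smul_comm, mul_smul_comm, smul_smul]
  rw [hRHS]
  rw [mul_smul_comm, smul_smul]
  congr 1
  have hfac : (((k+2).factorial : ℝ)) = ((k:ℝ) + 2) * ((k:ℝ) + 1) * (k.factorial : ℝ) := by
    rw [show k + 2 = (k + 1) + 1 from rfl, Nat.factorial_succ, Nat.factorial_succ]
    push_cast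
    ring
  rw [hfac]
  have hπ : (π : ℝ) ≠ 0 := Real.pi_ne_zero
  have hk0 : (k.factorial : ℝ) ≠ 0 := by
    exact_mod_cast Nat.factorial_ne_zero k
  field_simp

end
end
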